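/- Let G be the visibility graph of a 1.5D terrain with left-right order ≺, and let A, B ⊆ V(G) be sets with a ≺ b for every a ∈ A and b ∈ B. Then there do not exist vertices a_1 ≺ a_2 ≺ a_3 ≺ a_4 in A and b_1 ≺ b_2 ≺ b_3 ≺ b_4 in B such that either (a_i is adjacent to b_j iff (i,j) ∈ {(1,1),(3,2),(2,3),(4,4)}) or (a_i is adjacent to b_j iff (i,j) ∉ {(1,1),(3,2),(2,3),(4,4)}). (Equivalently, for such A and B the biadjacency matrix Adj_≺(G⟨A,B⟩) never equals the universal pattern M_2^0 or its complement M_2^1.) -/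

import Mathlib

/-- A 1.5D terrain: points `p_1, …, p_n` in the plane with strictly increasing
`x`-coordinates. -/
structure Terrain (n : ℕ) where
  pt : Fin n → ℝ × ℝ
  xmono : StrictMono fun i : Fin n => (pt i).1

/-- Vertices `i` and `j` of a terrain see each other: they are distinct and every terrain
vertex between them lies on or below the closed segment joining them. -/
def Terrain.Sees {n : ℕ} (T : Terrain n) (i j : Fin n) : Prop :=
  i ≠ j ∧ ∀ k : Fin n, min i j ≤ k → k ≤ max i j →
    ∃ z ∈ segment ℝ (T.pt (min i j)) (T.pt (max i j)),
      z.1 = (T.pt k).1 ∧ (T.pt k).2 ≤ z.2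

/-- The visibility graph of a terrain. -/
def Terrain.visibilityGraph {n : ℕ} (T : Terrain n) : SimpleGraph (Fin n) where
  Adj i j := T.Sees i j
  symm := ⟨by
    intro i j h
    refine ⟨h.1.symm, ?_⟩
    rw [min_comm j i, max_comm j i]
    exact h.2⟩
  loopless := ⟨fun i h => h.1 rfl⟩

/-- The positions of the `1` entries of the universal pattern `M_2^0` (0-based indices). -/
def Pat (i j : Fin 4) : Prop :=
  ((i : ℕ), (j : ℕ)) ∈ ({(0, 0), (2, 1), (1, 2), (3, 3)} : Set (ℕ × ℕ))

/-!
The key fact is the order claim: if `p ≺ q ≺ r ≺ s`, `p` sees `r` and `q` sees `s`, then `p`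
sees `s`. Indeed `q` lies below the chord `pr` and `r` below the chord `qs`, so `p, q, r, s` is
a convex chain; hence the chord `ps` lies above both `pr` and `qs`, and so above every terrain
vertex between `p` and `s`. Both patterns contain `a_i ≺ a_{i'} ≺ b_1 ≺ b_3` with `a_i b_1` and
`a_{i'} b_3` edges but `a_i b_3` a non-edge, which the order claim forbids.
-/

/-- For `P.1 < Q.1`, the point `R` lies on or below the line `PQ`, written as the sign of the
cross product `(Q - P) × (R - P)` so that no division occurs. -/
def BelowLine (P Q R : ℝ × ℝ) : Prop :=
  (Q.1 - P.1) * (R.2 - P.2) ≤ (Q.2 - P.2) * (R.1 - P.1)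

theorem exists_mem_segment_le_iff_belowLine {P Q R : ℝ × ℝ} (hPQ : P.1 < Q.1)
    (hPR : P.1 ≤ R.1) (hRQ : R.1 ≤ Q.1) :
    (∃ z ∈ segment ℝ P Q, z.1 = R.1 ∧ R.2 ≤ z.2) ↔ BelowLine P Q R := by
  have hd : 0 < Q.1 - P.1 := sub_pos.2 hPQ
  rw [segment_eq_image]
  constructor
  · rintro ⟨_, ⟨θ, -, rfl⟩, hx, hy⟩
    simp only [Prod.fst_add, Prod.snd_add, Prod.smul_fst, Prod.smul_snd, smul_eq_mul] at hx hy
    unfold BelowLine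
    linear_combination (Q.1 - P.1) * hy + (Q.2 - P.2) * hx
  · intro (h : _ ≤ _)
    set θ := (R.1 - P.1) / (Q.1 - P.1)
    have hθ : θ * (Q.1 - P.1) = R.1 - P.1 := div_mul_cancel₀ _ hd.ne'
    have hθ01 : θ ∈ Set.Icc (0 : ℝ) 1 :=
      ⟨div_nonneg (by linarith) hd.le, (div_le_one hd).2 (by linarith)⟩
    clear_value θ
    refine ⟨_, ⟨θ, hθ01, rfl⟩, ?_, ?_⟩
    · simp only [Prod.fst_add, Prod.smul_fst, smul_eq_mul]
      linear_combination hθ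
    · simp only [Prod.snd_add, Prod.smul_snd, smul_eq_mul]
      refine le_of_mul_le_mul_left ?_ hd
      linear_combination h - (Q.2 - P.2) * hθ

namespace BelowLine

variable {P Q R S K : ℝ × ℝ}

theorem trans_left (hPR : P.1 < R.1) (hPK : P.1 ≤ K.1) (hPS : P.1 ≤ S.1)
    (hR : BelowLine P S R) (hK : BelowLine P R K) : BelowLine P S K := by
  unfold BelowLine at *
  refine le_of_mul_le_mul_left ?_ (sub_pos.2 hPR)
  linear_combination (K.1 - P.1) * hR + (S.1 - P.1) * hK

theorem trans_right (hRS : R.1 < S.1) (hKS : K.1 ≤ S.1) (hPS : P.1 ≤ S.1)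
    (hR : BelowLine P S R) (hK : BelowLine R S K) : BelowLine P S K := by
  unfold BelowLine at *
  refine le_of_mul_le_mul_left ?_ (sub_pos.2 hRS)
  linear_combination (S.1 - K.1) * hR + (S.1 - P.1) * hK

theorem outer (hPQ : P.1 < Q.1) (hQR : Q.1 < R.1) (hRS : R.1 < S.1)
    (hQ : BelowLine P R Q) (hR : BelowLine Q S R) : BelowLine P S Q ∧ BelowLine P S R := by
  unfold BelowLine at *
  constructor
  · have hQS : Q.1 ≤ S.1 := (hQR.trans hRS).le
    refine le_of_mul_le_mul_left ?_ (sub_pos.2 hQR)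
    linear_combination (S.1 - Q.1) * hQ + (Q.1 - P.1) * hR
  · have hPR : P.1 ≤ R.1 := (hPQ.trans hQR).le
    refine le_of_mul_le_mul_left ?_ (sub_pos.2 hQR)
    linear_combination (S.1 - R.1) * hQ + (R.1 - P.1) * hR

end BelowLine

namespace Terrain

variable {n : ℕ} (T : Terrain n)

theorem sees_iff_of_lt {i j : Fin n} (hij : i < j) :
    T.Sees i j ↔ ∀ k, i ≤ k → k ≤ j → BelowLine (T.pt i) (T.pt j) (T.pt k) := by
  rw [Sees, min_eq_left hij.le, max_eq_right hij.le, and_iff_right hij.ne]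
  exact forall_congr' fun k => forall₂_congr fun hik hkj => exists_mem_segment_le_iff_belowLine
    (T.xmono hij) (T.xmono.monotone hik) (T.xmono.monotone hkj)

variable {T}

theorem Sees.trans_interleaved {p q r s : Fin n} (hpr : T.Sees p r) (hqs : T.Sees q s)
    (hpq : p < q) (hqr : q < r) (hrs : r < s) : T.Sees p s := by
  rw [T.sees_iff_of_lt (hpq.trans hqr)] at hpr
  rw [T.sees_iff_of_lt (hqr.trans hrs)] at hqs
  rw [T.sees_iff_of_lt (hpq.trans (hqr.trans hrs))]
  have hx := T.xmono
  obtain ⟨hQ, hR⟩ := (hpr q hpq.le hqr.le).outer (hx hpq) (hx hqr) (hx hrs) (hqs r hqr.le hrs.le)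
  intro k hpk hks
  rcases le_total k r with hkr | hrk
  · exact hR.trans_left (hx (hpq.trans hqr)) (hx.monotone hpk) (hx.monotone (hpk.trans hks))
      (hpr k hpk hkr)
  · exact hQ.trans_right (hx (hqr.trans hrs)) (hx.monotone hks) (hx.monotone (hpk.trans hks))
      (hqs k (hqr.le.trans hrk) hks)

end Terrain

/-- for a terrain visibility graph with left-right order `≺` and sets
`A ≺ B`, there are no `a_1 ≺ a_2 ≺ a_3 ≺ a_4` in `A` and `b_1 ≺ b_2 ≺ b_3 ≺ b_4` in `B`
whose biadjacency realizes the pattern `M_2^0` or its complement `M_2^1`. -/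
theorem stmt14 (n : ℕ) (T : Terrain n) (A B : Set (Fin n))
    (hAB : ∀ a ∈ A, ∀ b ∈ B, a < b) :
    ¬ ∃ a b : Fin 4 → Fin n,
      (∀ i, a i ∈ A) ∧ (∀ i, b i ∈ B) ∧ StrictMono a ∧ StrictMono b ∧
      ((∀ i j : Fin 4, T.visibilityGraph.Adj (a i) (b j) ↔ Pat i j) ∨
       (∀ i j : Fin 4, T.visibilityGraph.Adj (a i) (b j) ↔ ¬ Pat i j)) := by
  rintro ⟨a, b, hA, hB, ha, hb, hpat⟩
  have sees_b2 (i i' : Fin 4) (hi : i < i') (h : T.Sees (a i) (b 0))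
      (h' : T.Sees (a i') (b 2)) : T.Sees (a i) (b 2) :=
    h.trans_interleaved h' (ha hi) (hAB _ (hA i') _ (hB 0)) (hb (by decide))
  rcases hpat with hpat | hpat
  · exact (hpat 0 2).not.2 (by simp [Pat])
      (sees_b2 0 1 (by decide) ((hpat 0 0).2 (by simp [Pat])) ((hpat 1 2).2 (by simp [Pat])))
  · exact (hpat 1 2).not.2 (by simp [Pat])
      (sees_b2 1 2 (by decide) ((hpat 1 0).2 (by simp [Pat])) ((hpat 2 2).2 (by simp [Pat])))
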